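/- arXiv:0910.4857 — 5 statements merged into one kernel-verified Lean document; each statement's English description precedes it below -/
import Mathlib

section
/- Let ⟨A|R⟩ be a monoid presentation satisfying the condition C(2) and let u be a relation word. Then for any word v over A, u ≡_R v if and only if there exist n ≥ 1 and words u = u₁, u₂, …, uₙ = v such that for every 1 ≤ i < n either (uᵢ, uᵢ₊₁) ∈ R or (uᵢ₊₁, uᵢ) ∈ R. -/
open FreeMonoid

/-- The congruence on the free monoid generated by a presentation `R`. -/
def presCon {A : Type*} (R : Set (FreeMonoid A × FreeMonoid A)) : Con (FreeMonoid A) :=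
  conGen fun u v => (u, v) ∈ R

/-- `w` is a relation word of the presentation `R`. -/
def IsRelWord {A : Type*} (R : Set (FreeMonoid A × FreeMonoid A)) (w : FreeMonoid A) : Prop :=
  ∃ p ∈ R, p.1 = w ∨ p.2 = w

/-- `u` is a factor of `w`. -/
def IsFactor {A : Type*} (u w : FreeMonoid A) : Prop := ∃ p q, w = p * u * q

/-- `u` is a piece of the presentation `R`: it is empty, or occurs as a factor of two
distinct relation words, or in two different (possibly overlapping) positions within
one relation word. -/
def IsPiece {A : Type*} (R : Set (FreeMonoid A × FreeMonoid A)) (u : FreeMonoid A) : Prop :=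
  u = 1 ∨
  (∃ w₁ w₂, IsRelWord R w₁ ∧ IsRelWord R w₂ ∧ w₁ ≠ w₂ ∧ IsFactor u w₁ ∧ IsFactor u w₂) ∨
  (∃ w, IsRelWord R w ∧ ∃ p q p' q', w = p * u * q ∧ w = p' * u * q' ∧ p ≠ p')

/-- The small overlap condition `C(m)`: no relation word is a product of strictly fewer
than `m` pieces. -/
def SmallOverlapC {A : Type*} (R : Set (FreeMonoid A × FreeMonoid A)) (m : ℕ) : Prop :=
  ∀ w, IsRelWord R w → ∀ l : List (FreeMonoid A),
    (∀ x ∈ l, IsPiece R x) → l.prod = w → m ≤ l.length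

/-!
In any monoid, the congruence generated by `r` relates exactly the elements joined by a chain of
elementary rewrites `p * a * q ↔ p * b * q` with `r a b`. Under `C(2)` no relation word is a
piece, so a relation word contains no other relation word as a factor and occurs in itself only
trivially; hence every rewrite starting at a relation word replaces the whole word and lands on
another relation word, and a rewriting chain from `u` never leaves the set of relation words.
-/

open Relation

section RewriteStep

variable {M : Type*} [Monoid M]

def RewriteStep (r : M → M → Prop) (x y : M) : Prop :=
  ∃ p q a b, r a b ∧ x = p * a * q ∧ y = p * b * q

variable {r : M → M → Prop}

theorem RewriteStep.of_rel {a b : M} (h : r a b) : RewriteStep r a b :=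
  ⟨1, 1, a, b, h, by simp, by simp⟩

theorem RewriteStep.mul_left (z : M) {x y : M} (h : RewriteStep r x y) :
    RewriteStep r (z * x) (z * y) := by
  obtain ⟨p, q, a, b, hab, rfl, rfl⟩ := h
  exact ⟨z * p, q, a, b, hab, by simp only [mul_assoc], by simp only [mul_assoc]⟩

theorem RewriteStep.mul_right (z : M) {x y : M} (h : RewriteStep r x y) :
    RewriteStep r (x * z) (y * z) := by
  obtain ⟨p, q, a, b, hab, rfl, rfl⟩ := h
  exact ⟨p, q * z, a, b, hab, by simp only [mul_assoc], by simp only [mul_assoc]⟩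

variable (r) in
def rewriteCon : Con M where
  r := ReflTransGen (SymmGen (RewriteStep r))
  iseqv :=
    have : IsEquiv M (ReflTransGen (SymmGen (RewriteStep r))) := ⟨⟩
    ⟨refl, fun h => symm h, fun h h' => _root_.trans h h'⟩
  mul' {_ x y _} hwx hyz :=
    (hwx.lift (· * y) fun _ _ h => h.imp (.mul_right y) (.mul_right y)).trans
      (hyz.lift (x * ·) fun _ _ h => h.imp (.mul_left x) (.mul_left x))

theorem conGen_of_rewriteStep {x y : M} (h : RewriteStep r x y) : conGen r x y := by
  obtain ⟨p, q, a, b, hab, rfl, rfl⟩ := h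
  exact (conGen r).mul ((conGen r).mul ((conGen r).refl p) (.of a b hab)) ((conGen r).refl q)

theorem conGen_iff_reflTransGen_rewriteStep {x y : M} :
    conGen r x y ↔ ReflTransGen (SymmGen (RewriteStep r)) x y := by
  refine ⟨fun h => (Con.conGen_le (c := rewriteCon r)).mpr
    (fun _ _ hab => ReflTransGen.single (.inl (.of_rel hab))) h, fun h => ?_⟩
  induction h with
  | refl => exact (conGen r).refl x
  | tail _ hs ih =>
    exact (conGen r).trans ih <|
      hs.elim conGen_of_rewriteStep fun h => (conGen r).symm (conGen_of_rewriteStep h)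

end RewriteStep

section SmallOverlap

variable {A : Type*} {R : Set (FreeMonoid A × FreeMonoid A)}

theorem IsRelWord.not_isPiece (hC : SmallOverlapC R 2) {w : FreeMonoid A}
    (hw : IsRelWord R w) : ¬ IsPiece R w := fun hp => by
  simpa using hC w hw [w] (by simpa using hp) (by simp)

theorem FreeMonoid.eq_one_of_self_eq_mul_mul {u p q : FreeMonoid A} (h : u = p * u * q) :
    p = 1 ∧ q = 1 := by
  have hlen := congrArg FreeMonoid.length h
  simp only [FreeMonoid.length_mul] at hlen
  exact ⟨FreeMonoid.length_eq_zero.mp (by omega), FreeMonoid.length_eq_zero.mp (by omega)⟩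

theorem IsRelWord.eq_one_of_eq_mul_mul (hC : SmallOverlapC R 2) {u r p q : FreeMonoid A}
    (hu : IsRelWord R u) (hr : IsRelWord R r) (h : u = p * r * q) : p = 1 ∧ q = 1 := by
  obtain rfl : u = r := by
    by_contra hne
    exact hr.not_isPiece hC (Or.inr (Or.inl ⟨u, r, hu, hr, hne, ⟨p, q, h⟩, ⟨1, 1, by simp⟩⟩))
  exact FreeMonoid.eq_one_of_self_eq_mul_mul h

theorem IsRelWord.symmGen_of_symmGen_rewriteStep (hC : SmallOverlapC R 2) {x y : FreeMonoid A}
    (hx : IsRelWord R x) (h : SymmGen (RewriteStep (fun a b => (a, b) ∈ R)) x y) :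
    SymmGen (fun a b => (a, b) ∈ R) x y := by
  rcases h with ⟨p, q, a, b, hab, rfl, rfl⟩ | ⟨p, q, a, b, hab, rfl, rfl⟩
  · obtain ⟨rfl, rfl⟩ := hx.eq_one_of_eq_mul_mul hC ⟨_, hab, .inl rfl⟩ rfl
    exact .inl (by simpa using hab)
  · obtain ⟨rfl, rfl⟩ := hx.eq_one_of_eq_mul_mul hC ⟨_, hab, .inr rfl⟩ rfl
    exact .inr (by simpa using hab)

theorem isRelWord_of_symmGen {x y : FreeMonoid A} (h : SymmGen (fun a b => (a, b) ∈ R) x y) :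
    IsRelWord R y :=
  h.elim (fun h => ⟨_, h, .inr rfl⟩) (fun h => ⟨_, h, .inl rfl⟩)

end SmallOverlap

/-- **Proposition (relation word classes in C(2) presentations).**
If `u` is a relation word of a C(2) presentation `⟨A|R⟩`, then `u ≡_R v` iff `u` and `v`
are connected by a chain of whole-word applications of relations of `R` (in either
direction). -/
theorem statement0 {A : Type*} (R : Set (FreeMonoid A × FreeMonoid A))
    (hC : SmallOverlapC R 2) (u : FreeMonoid A) (hu : IsRelWord R u) (v : FreeMonoid A) :
    presCon R u v ↔
      Relation.ReflTransGen (fun x y => (x, y) ∈ R ∨ (y, x) ∈ R) u v := by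
  rw [presCon, conGen_iff_reflTransGen_rewriteStep]
  refine ⟨fun h => ?_, ReflTransGen.mono (fun _ _ hxy => hxy.imp .of_rel .of_rel) u v⟩
  induction h using ReflTransGen.head_induction_on with
  | refl => exact .refl
  | head hs _ ih =>
    have hstep := hu.symmGen_of_symmGen_rewriteStep hC hs
    exact .head hstep (ih (isRelWord_of_symmGen hstep))
end

section
/- Let ⟨A|R⟩ be a monoid presentation satisfying the condition C(2), let u be a relation word, and let u' be a proper factor of u (that is, u = p u' q for words p, q not both empty). Then for any word v over A, u' ≡_R v if and only if u' = v. -/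
open FreeMonoid

/-!
The relation "`x = y`, or both `x` and `y` contain a relation word as a factor" is a congruence
containing `R`, hence it contains `≡_R`: a word with no relation word as a factor is congruent only
to itself. Under `C(2)` a relation word is not a piece, so the only relation word occurring as a
factor of a relation word `u` is `u` itself, and `u` does not occur in a proper factor of itself.
-/

namespace IsFactor

variable {A : Type*}

lemma refl (w : FreeMonoid A) : IsFactor w w := ⟨1, 1, by simp⟩

lemma mul_left {u w : FreeMonoid A} (a : FreeMonoid A) (h : IsFactor u w) :
    IsFactor u (a * w) := by
  obtain ⟨s, t, rfl⟩ := h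
  exact ⟨a * s, t, by simp [mul_assoc]⟩

lemma mul_right {u w : FreeMonoid A} (a : FreeMonoid A) (h : IsFactor u w) :
    IsFactor u (w * a) := by
  obtain ⟨s, t, rfl⟩ := h
  exact ⟨s, t * a, by simp [mul_assoc]⟩

lemma trans {u v w : FreeMonoid A} (huv : IsFactor u v) (hvw : IsFactor v w) : IsFactor u w := by
  obtain ⟨s, t, rfl⟩ := huv
  obtain ⟨s', t', rfl⟩ := hvw
  exact ⟨s' * s, t * t', by simp [mul_assoc]⟩

end IsFactor

lemma FreeMonoid.eq_one_of_mul_mul_eq_self {A : Type*} {p x q : FreeMonoid A}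
    (h : p * x * q = x) : p = 1 ∧ q = 1 := by
  have hlen := congrArg FreeMonoid.length h
  simp only [length_mul] at hlen
  exact ⟨length_eq_zero.mp (by omega), length_eq_zero.mp (by omega)⟩

section Congruence

variable {A : Type*} (R : Set (FreeMonoid A × FreeMonoid A))

def HasRelFactor (x : FreeMonoid A) : Prop :=
  ∃ w, IsRelWord R w ∧ IsFactor w x

variable {R}

lemma HasRelFactor.mul_left {x : FreeMonoid A} (a : FreeMonoid A) (h : HasRelFactor R x) :
    HasRelFactor R (a * x) :=
  let ⟨w, hw, hwx⟩ := h; ⟨w, hw, hwx.mul_left a⟩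

lemma HasRelFactor.mul_right {x : FreeMonoid A} (a : FreeMonoid A) (h : HasRelFactor R x) :
    HasRelFactor R (x * a) :=
  let ⟨w, hw, hwx⟩ := h; ⟨w, hw, hwx.mul_right a⟩

variable (R)

def relFactorCon : Con (FreeMonoid A) where
  r x y := x = y ∨ (HasRelFactor R x ∧ HasRelFactor R y)
  iseqv := by
    refine ⟨fun _ => Or.inl rfl, ?_, ?_⟩
    · rintro x y (rfl | ⟨hx, hy⟩)
      exacts [Or.inl rfl, Or.inr ⟨hy, hx⟩]
    · rintro x y z (rfl | ⟨hx, hy⟩) (rfl | ⟨hy', hz⟩)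
      exacts [Or.inl rfl, Or.inr ⟨hy', hz⟩, Or.inr ⟨hx, hy⟩, Or.inr ⟨hx, hz⟩]
  mul' := by
    rintro w x y z (rfl | ⟨hw, hx⟩) (rfl | ⟨hy, hz⟩)
    · exact Or.inl rfl
    · exact Or.inr ⟨hy.mul_left w, hz.mul_left w⟩
    · exact Or.inr ⟨hw.mul_right y, hx.mul_right y⟩
    · exact Or.inr ⟨hw.mul_right y, hz.mul_left x⟩

lemma presCon_le_relFactorCon : presCon R ≤ relFactorCon R :=
  Con.conGen_le.mpr fun x y hxy =>
    Or.inr ⟨⟨x, ⟨(x, y), hxy, Or.inl rfl⟩, IsFactor.refl x⟩,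
      ⟨y, ⟨(x, y), hxy, Or.inr rfl⟩, IsFactor.refl y⟩⟩

variable {R}

lemma eq_of_presCon_of_not_hasRelFactor {x y : FreeMonoid A} (hx : ¬HasRelFactor R x)
    (hxy : presCon R x y) : x = y :=
  (presCon_le_relFactorCon R hxy).resolve_right fun h => hx h.1

end Congruence

namespace SmallOverlapC

variable {A : Type*} {R : Set (FreeMonoid A × FreeMonoid A)}

lemma not_isPiece (hC : SmallOverlapC R 2) {w : FreeMonoid A} (hw : IsRelWord R w) :
    ¬IsPiece R w := fun hpiece => by
  simpa using hC w hw [w] (by simpa using hpiece) (by simp)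

lemma eq_of_isFactor (hC : SmallOverlapC R 2) {u w : FreeMonoid A} (hu : IsRelWord R u)
    (hw : IsRelWord R w) (hwu : IsFactor w u) : w = u := by
  by_contra hne
  exact hC.not_isPiece hw (Or.inr (Or.inl ⟨u, w, hu, hw, Ne.symm hne, hwu, IsFactor.refl w⟩))

lemma not_hasRelFactor_of_proper_factor (hC : SmallOverlapC R 2) {u u' p q : FreeMonoid A}
    (hu : IsRelWord R u) (hfac : u = p * u' * q) (hproper : ¬(p = 1 ∧ q = 1)) :
    ¬HasRelFactor R u' := by
  rintro ⟨w, hw, hwu'⟩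
  have hu'u : IsFactor u' u := ⟨p, q, hfac⟩
  obtain rfl := hC.eq_of_isFactor hu hw (hwu'.trans hu'u)
  obtain ⟨a, b, rfl⟩ := hwu'
  have hself : (p * a) * w * (b * q) = w := by simpa only [mul_assoc] using hfac.symm
  obtain ⟨hpa, hbq⟩ := FreeMonoid.eq_one_of_mul_mul_eq_self hself
  exact hproper ⟨eq_one_of_mul_right' hpa, eq_one_of_mul_left' hbq⟩

end SmallOverlapC

/-- **Proposition (proper factors of relation words in C(2) presentations).**
If `u` is a relation word of a C(2) presentation and `u'` is a proper factor of `u`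
(i.e. `u = p * u' * q` with `p, q` not both empty), then `u' ≡_R v` iff `u' = v`. -/
theorem statement1 {A : Type*} (R : Set (FreeMonoid A × FreeMonoid A))
    (hC : SmallOverlapC R 2) (u : FreeMonoid A) (hu : IsRelWord R u)
    (u' p q : FreeMonoid A) (hfac : u = p * u' * q) (hproper : ¬(p = 1 ∧ q = 1))
    (v : FreeMonoid A) :
    presCon R u' v ↔ u' = v :=
  ⟨eq_of_presCon_of_not_hasRelFactor (hC.not_hasRelFactor_of_proper_factor hu hfac hproper),
    fun h => h ▸ (presCon R).refl u'⟩
end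

section
/- Let ⟨A|R⟩ be a monoid presentation satisfying the condition C(2) and let a ∈ A. Then either the element [a]_R is indecomposable in the monoid presented, or the generator a is redundant. -/
open FreeMonoid

/-!
Suppose `[a]` is not generated by the other generators. Under `C(2)` a relation word is nonempty
and is never a factor of a different relation word (it would be a piece). Hence a relation word
occurring in the one-letter word `a` is `a` itself, and its partner in the relation is either `a`
or a word avoiding the letter `a`; the latter would make `a` redundant. So no relation applies to
`a`: the singleton `{a}` is a union of congruence classes, and a factorisation `[a] = x y` lifts
to a factorisation of the word `a` in the free monoid, where one factor must be empty.
-/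

namespace FreeMonoid

variable {α : Type*}

theorem eq_one_or_eq_one_of_mul_eq_of {u v : FreeMonoid α} {a : α} (h : u * v = of a) :
    u = 1 ∨ v = 1 := by
  have hlen : u.length + v.length = 1 := by rw [← length_mul, h, length_of]
  rcases Nat.eq_zero_or_pos u.length with hu | hu
  · exact Or.inl (length_eq_zero.mp hu)
  · exact Or.inr (length_eq_zero.mp (by omega))

theorem eq_of_mul_mul_eq_of {p u q : FreeMonoid α} {a : α} (h : p * u * q = of a) (hu : u ≠ 1) :
    p = 1 ∧ u = of a ∧ q = 1 := by
  have hlen : p.length + u.length + q.length = 1 := by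
    rw [← length_mul, ← length_mul, h, length_of]
  have hu : u.length ≠ 0 := fun h0 => hu (length_eq_zero.mp h0)
  have hp : p = 1 := length_eq_zero.mp (by omega)
  have hq : q = 1 := length_eq_zero.mp (by omega)
  subst hp hq
  exact ⟨rfl, by simpa using h, rfl⟩

theorem isFactor_of_of_mem {a : α} {w : FreeMonoid α} (h : a ∈ w) : IsFactor (of a) w := by
  obtain ⟨l₁, l₂, hl⟩ := List.append_of_mem h
  exact ⟨ofList l₁, ofList l₂, toList.injective (by simp [hl]; rfl)⟩

theorem mem_closure_of_forall_mem {M : Type*} [Monoid M] (f : FreeMonoid α →* M)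
    {P : α → Prop} {w : FreeMonoid α} (hw : ∀ b ∈ w, P b) :
    f w ∈ Submonoid.closure {x | ∃ b, P b ∧ x = f (of b)} := by
  induction w using FreeMonoid.inductionOn' with
  | one => simp
  | of_mul b w ih =>
    rw [map_mul]
    refine Submonoid.mul_mem _ (Submonoid.subset_closure ⟨b, ?_, rfl⟩) (ih ?_)
    · exact hw b (mem_mul.mpr (Or.inl mem_of_self))
    · exact fun c hc => hw c (mem_mul.mpr (Or.inr hc))

end FreeMonoid

def Con.syntactic {M : Type*} [Monoid M] (L : Set M) : Con M where
  r u v := ∀ p q, p * u * q ∈ L ↔ p * v * q ∈ L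
  iseqv :=
    { refl := fun _ _ _ => Iff.rfl
      symm := fun h p q => (h p q).symm
      trans := fun h₁ h₂ p q => (h₁ p q).trans (h₂ p q) }
  mul' := fun {u₁ v₁ u₂ v₂} h₁ h₂ p q => by
    have h₁' := h₁ p (u₂ * q)
    have h₂' := h₂ (p * v₁) q
    simp only [mul_assoc] at h₁' h₂' ⊢
    exact h₁'.trans h₂'

theorem Con.mem_iff_of_le_syntactic {M : Type*} [Monoid M] {L : Set M} {c : Con M}
    (hc : c ≤ Con.syntactic L) {u v : M} (h : c u v) : u ∈ L ↔ v ∈ L := by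
  simpa using hc h 1 1

namespace SmallOverlapC

variable {A : Type*} {R : Set (FreeMonoid A × FreeMonoid A)} {m : ℕ}

theorem not_isRelWord_one (hC : SmallOverlapC R m) (hm : 0 < m) : ¬IsRelWord R 1 := by
  intro h
  have := hC 1 h [] (by simp) (by simp)
  simp at this
  omega

theorem not_isFactor (hC : SmallOverlapC R m) (hm : 1 < m) {w w' : FreeMonoid A}
    (hw : IsRelWord R w) (hw' : IsRelWord R w') (hne : w ≠ w') : ¬IsFactor w w' := by
  intro hfac
  have hpiece : IsPiece R w := Or.inr (Or.inl ⟨w, w', hw, hw', hne, ⟨1, 1, by simp⟩, hfac⟩)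
  have := hC w hw [w] (by simpa using hpiece) (by simp)
  simp at this
  omega

end SmallOverlapC

section Presentation

variable {A : Type*} {R : Set (FreeMonoid A × FreeMonoid A)}

def otherGeneratorsClosure (R : Set (FreeMonoid A × FreeMonoid A)) (a : A) :
    Submonoid (presCon R).Quotient :=
  Submonoid.closure {x : (presCon R).Quotient | ∃ b : A, b ≠ a ∧ x = (presCon R).mk' (of b)}

theorem isRelWord_of_mem_rel {r s : FreeMonoid A} (h : (r, s) ∈ R ∨ (s, r) ∈ R) :
    IsRelWord R r :=
  h.elim (fun h => ⟨_, h, Or.inl rfl⟩) fun h => ⟨_, h, Or.inr rfl⟩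

theorem eq_of_of_mem_rel (hC : SmallOverlapC R 2) {a : A}
    (hnr : (presCon R).mk' (of a) ∉ otherGeneratorsClosure R a)
    {s : FreeMonoid A} (hs : (of a, s) ∈ R ∨ (s, of a) ∈ R) : s = of a := by
  by_contra hne
  have hnoa : ∀ b ∈ s, b ≠ a := by
    rintro b hb rfl
    exact hC.not_isFactor one_lt_two (isRelWord_of_mem_rel hs) (isRelWord_of_mem_rel hs.symm)
      (Ne.symm hne) (isFactor_of_of_mem hb)
  have hcon : presCon R (of a) s :=
    hs.elim (fun h => ConGen.Rel.of _ _ h) fun h => (ConGen.Rel.of _ _ h).symm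
  have hclass : (presCon R).mk' (of a) = (presCon R).mk' s := (Con.eq _).mpr hcon
  apply hnr
  rw [hclass]
  exact mem_closure_of_forall_mem _ hnoa

theorem presCon_le_syntactic_of (hC : SmallOverlapC R 2) {a : A}
    (hnr : (presCon R).mk' (of a) ∉ otherGeneratorsClosure R a) :
    presCon R ≤ Con.syntactic {of a} := by
  have step : ∀ r s p q, (r, s) ∈ R ∨ (s, r) ∈ R →
      p * r * q = of a → p * s * q = of a := by
    intro r s p q hrs h
    have hr : r ≠ 1 := by
      rintro rfl
      exact hC.not_isRelWord_one two_pos (isRelWord_of_mem_rel hrs)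
    obtain ⟨rfl, rfl, rfl⟩ := eq_of_mul_mul_eq_of h hr
    simpa using eq_of_of_mem_rel hC hnr hrs
  refine Con.conGen_le.mpr fun u v huv p q => ⟨step u v p q (Or.inl huv), ?_⟩
  exact step v u p q (Or.inr huv)

end Presentation

/-- **Proposition.** In a C(2) presentation, each generator `a` is either indecomposable
(its class is a non-identity element that admits no nontrivial factorisation) or
redundant (its class lies in the submonoid generated by the classes of the other
generators). -/
theorem statement3 {A : Type*} (R : Set (FreeMonoid A × FreeMonoid A))
    (hC : SmallOverlapC R 2) (a : A) :
    ((presCon R).mk' (of a) ≠ 1 ∧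
      ∀ x y : (presCon R).Quotient, x * y = (presCon R).mk' (of a) → x = 1 ∨ y = 1) ∨
    (presCon R).mk' (of a) ∈
      Submonoid.closure {x : (presCon R).Quotient | ∃ b : A, b ≠ a ∧ x = (presCon R).mk' (of b)} := by
  by_cases hred : (presCon R).mk' (of a) ∈ otherGeneratorsClosure R a
  · exact Or.inr hred
  have hclass : ∀ w, (presCon R).mk' w = (presCon R).mk' (of a) → w = of a := fun w h =>
    (Con.mem_iff_of_le_syntactic (presCon_le_syntactic_of hC hred) ((Con.eq _).mp h)).mpr rfl
  refine Or.inl ⟨fun h => of_ne_one a (hclass 1 (by rw [map_one, h])).symm, fun x y hxy => ?_⟩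
  obtain ⟨u, rfl⟩ := Con.mk'_surjective x
  obtain ⟨v, rfl⟩ := Con.mk'_surjective y
  rw [← map_mul] at hxy
  rcases eq_one_or_eq_one_of_mul_eq_of (hclass _ hxy) with rfl | rfl
  · exact Or.inl (map_one _)
  · exact Or.inr (map_one _)
end

section
/- Let ⟨A|R⟩ be a presentation satisfying the condition C(4). Suppose w = XYZw' where XYZ is a relation word with maximal piece prefix X and middle word Y, XY is a clean overlap prefix of w, and p is any piece. Then ρ(pw') < ρ(w). -/
open FreeMonoid

/-- `X` is the maximal piece prefix of the word `W`. -/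
def IsMaxPiecePrefix {A : Type*} (R : Set (FreeMonoid A × FreeMonoid A))
    (W X : FreeMonoid A) : Prop :=
  IsPiece R X ∧ (∃ t, X * t = W) ∧
    ∀ X', IsPiece R X' → (∃ t, X' * t = W) → X'.length ≤ X.length

/-- `Z` is the maximal piece suffix of the word `W`. -/
def IsMaxPieceSuffix {A : Type*} (R : Set (FreeMonoid A × FreeMonoid A))
    (W Z : FreeMonoid A) : Prop :=
  IsPiece R Z ∧ (∃ t, t * Z = W) ∧
    ∀ Z', IsPiece R Z' → (∃ t, t * Z' = W) → Z'.length ≤ Z.length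

/-- `X * Y * Z` is a relation word with maximal piece prefix `X`, (nonempty) middle
word `Y` and maximal piece suffix `Z`. -/
def MiddleFact {A : Type*} (R : Set (FreeMonoid A × FreeMonoid A))
    (X Y Z : FreeMonoid A) : Prop :=
  IsRelWord R (X * Y * Z) ∧ IsMaxPiecePrefix R (X * Y * Z) X ∧
    IsMaxPieceSuffix R (X * Y * Z) Z ∧ Y ≠ 1

/-- `a * X * Y` is a relation prefix of `u`, where `X` and `Y` are the maximal piece
prefix and middle word of some relation word `X * Y * Z`. -/
def IsRelationPrefix {A : Type*} (R : Set (FreeMonoid A × FreeMonoid A))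
    (u a X Y : FreeMonoid A) : Prop :=
  (∃ t, a * X * Y * t = u) ∧ ∃ Z, MiddleFact R X Y Z

/-- The relation prefix `a * X * Y` of `u` is clean: `u` has no prefix
`a * X * Y' * X₁ * Y₁` with `Y'` a proper nonempty prefix of `Y` and `X₁`, `Y₁` the
maximal piece prefix and middle word of some relation word. -/
def IsCleanRelationPrefix {A : Type*} (R : Set (FreeMonoid A × FreeMonoid A))
    (u a X Y : FreeMonoid A) : Prop :=
  IsRelationPrefix R u a X Y ∧
  ¬ ∃ Y' X₁ Y₁ : FreeMonoid A, Y' ≠ 1 ∧ Y' ≠ Y ∧ (∃ t, Y' * t = Y) ∧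
      (∃ Z₁, MiddleFact R X₁ Y₁ Z₁) ∧ (∃ t, a * X * Y' * X₁ * Y₁ * t = u)

/-- `p` is an overlap prefix of `u`: a relation prefix admitting a factorisation
`b * X₁ * Y₁' * ⋯ * Xₙ₋₁ * Yₙ₋₁' * Xₙ * Yₙ` (each `Xᵢ`, `Yᵢ` the maximal piece prefix
and middle word of a relation word, each `Yᵢ'` a proper nonempty prefix of `Yᵢ`), such
that `p` has no factor of the form `X₀ * Y₀` beginning before the end of `b`. -/
def IsOverlapPrefix {A : Type*} (R : Set (FreeMonoid A × FreeMonoid A))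
    (u p : FreeMonoid A) : Prop :=
  (∃ t, p * t = u) ∧
  ∃ (b : FreeMonoid A) (pairs : List (FreeMonoid A × FreeMonoid A))
    (Xn Yn : FreeMonoid A),
    p = b * (pairs.map fun q => q.1 * q.2).prod * Xn * Yn ∧
    (∃ Zn, MiddleFact R Xn Yn Zn) ∧
    (∀ q ∈ pairs, ∃ Y : FreeMonoid A,
      (∃ Z, MiddleFact R q.1 Y Z) ∧ q.2 ≠ 1 ∧ q.2 ≠ Y ∧ ∃ t, q.2 * t = Y) ∧
    ¬ ∃ s t X₀ Y₀ : FreeMonoid A, (∃ Z₀, MiddleFact R X₀ Y₀ Z₀) ∧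
        p = s * (X₀ * Y₀) * t ∧ s.length < b.length

/-- `p` is a clean overlap prefix of `u`. -/
def IsCleanOverlapPrefix {A : Type*} (R : Set (FreeMonoid A × FreeMonoid A))
    (u p : FreeMonoid A) : Prop :=
  IsOverlapPrefix R u p ∧ ∃ a X Y, p = a * X * Y ∧ IsCleanRelationPrefix R u a X Y

open Classical in
/-- The induction parameter `ρ`: `ρ(w) = -1` if `w` has no clean overlap prefix, and
otherwise `ρ(w)` is the length of the suffix of `w` following its clean overlap
prefix. -/
noncomputable def rho {A : Type*} (R : Set (FreeMonoid A × FreeMonoid A))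
    (w : FreeMonoid A) : ℤ :=
  if h : ∃ p, IsCleanOverlapPrefix R w p then (w.length : ℤ) - (h.choose.length : ℤ)
  else -1


/-!
Write `W = X * Y * Z` and `u = W * w'`. A clean overlap prefix of `p * w'` ends beyond `p`:
otherwise some `X₁ * Y₁` would be a factor of the piece `p`, although `X₁` is the longest piece
prefix of its relation word. Hence `ρ(p * w') < |w'|`, and it remains to see that no overlap
prefix of `u` ends beyond `W`, so that `ρ(u) ≥ |w'|`.

Such an overlap prefix contains `X * Y` at position `0`, so it starts at the beginning of `u` and
is a product of chunks `xᵢ * yᵢ'`. A chunk `x * y'` having `X * Y` as a prefix shares this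
non-piece with `W`, so its relation word is `W` and `y'` is the whole middle word. This excludes
a single chunk reaching past `W`, and a proper first chunk `x₁ * y₁'` covering `X * Y`. Otherwise
the second chunk starts inside `W` at a positive position, so its overlap with `W` is a piece:
either it contains `x₂ * y₂'`, which is not a piece, or it is a suffix of `W` longer than `Z`.
-/

section SmallOverlap

variable {A : Type*} {R : Set (FreeMonoid A × FreeMonoid A)}

namespace FreeMonoid

def IsPrefix (u v : FreeMonoid A) : Prop := ∃ t, u * t = v

namespace IsPrefix

variable {a b c : FreeMonoid A}

lemma refl (a : FreeMonoid A) : IsPrefix a a := ⟨1, mul_one a⟩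

lemma mul_right (a b : FreeMonoid A) : IsPrefix a (a * b) := ⟨b, rfl⟩

lemma trans (h₁ : IsPrefix a b) (h₂ : IsPrefix b c) : IsPrefix a c := by
  obtain ⟨s, rfl⟩ := h₁
  obtain ⟨t, rfl⟩ := h₂
  exact ⟨s * t, (mul_assoc a s t).symm⟩

lemma mul_left (h : IsPrefix b c) (a : FreeMonoid A) : IsPrefix (a * b) (a * c) := by
  obtain ⟨t, rfl⟩ := h
  exact ⟨t, mul_assoc a b t⟩

lemma of_mul_left (h : IsPrefix (a * b) (a * c)) : IsPrefix b c := by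
  obtain ⟨t, ht⟩ := h
  exact ⟨t, mul_left_cancel (by rwa [← mul_assoc])⟩

lemma length_le (h : IsPrefix a b) : a.length ≤ b.length := by
  obtain ⟨t, rfl⟩ := h
  simp [length_mul]

lemma eq_of_length_le (h : IsPrefix a b) (hl : b.length ≤ a.length) : a = b := by
  obtain ⟨t, rfl⟩ := h
  rw [length_mul] at hl
  rw [show t = 1 from length_eq_zero.mp (by omega), mul_one]

lemma toList_isPrefix (h : IsPrefix a b) : a.toList <+: b.toList := by
  obtain ⟨t, rfl⟩ := h
  exact ⟨t.toList, rfl⟩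

lemma of_length_le (ha : IsPrefix a c) (hb : IsPrefix b c) (hl : a.length ≤ b.length) :
    IsPrefix a b := by
  obtain ⟨t, ht⟩ := List.prefix_of_prefix_length_le ha.toList_isPrefix hb.toList_isPrefix hl
  exact ⟨ofList t, ht⟩

lemma total (ha : IsPrefix a c) (hb : IsPrefix b c) : IsPrefix a b ∨ IsPrefix b a :=
  (le_total a.length b.length).imp (ha.of_length_le hb) (hb.of_length_le ha)

end IsPrefix

lemma length_pos_of_ne_one {a : FreeMonoid A} (h : a ≠ 1) : 0 < a.length :=
  Nat.pos_of_ne_zero (mt length_eq_zero.mp h)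

end FreeMonoid

lemma IsPiece.of_isFactor {p u : FreeMonoid A} (hp : IsPiece R p) (hu : IsFactor u p) :
    IsPiece R u := by
  obtain ⟨s, t, rfl⟩ := hu
  rcases hp with h | ⟨w₁, w₂, hw₁, hw₂, hne, ⟨p₁, q₁, rfl⟩, ⟨p₂, q₂, rfl⟩⟩ |
      ⟨w, hw, p₁, q₁, p₂, q₂, rfl, he, hne⟩
  · left
    have := congrArg length h
    simp only [length_mul, length_one] at this
    exact length_eq_zero.mp (by omega)
  · exact Or.inr <| Or.inl ⟨_, _, hw₁, hw₂, hne, ⟨p₁ * s, t * q₁, by simp only [mul_assoc]⟩,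
      ⟨p₂ * s, t * q₂, by simp only [mul_assoc]⟩⟩
  · exact Or.inr <| Or.inr ⟨_, hw, p₁ * s, t * q₁, p₂ * s, t * q₂, by simp only [mul_assoc],
      by rw [he]; simp only [mul_assoc], fun h => hne (mul_right_cancel h)⟩

lemma isPiece_of_two_occurrences {W W' u u' f v v' : FreeMonoid A} (hW : IsRelWord R W)
    (hW' : IsRelWord R W') (h : W = u * f * v) (h' : W' = u' * f * v')
    (hne : W ≠ W' ∨ u ≠ u') : IsPiece R f := by
  by_cases hWW' : W = W'
  · subst hWW'
    exact Or.inr <| Or.inr ⟨W, hW, u, v, u', v', h, h', hne.resolve_left (not_not.mpr rfl)⟩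
  · exact Or.inr <| Or.inl ⟨W, W', hW, hW', hWW', ⟨u, v, h⟩, ⟨u', v', h'⟩⟩

namespace MiddleFact

variable {X Y Z x y Y₁ Z₁ : FreeMonoid A}

lemma not_isPiece_mul (hMF : MiddleFact R X Y Z) (hy : y ≠ 1) (hyY : IsPrefix y Y) :
    ¬ IsPiece R (X * y) := fun h => by
  obtain ⟨t, rfl⟩ := hyY
  have := hMF.2.1.2.2 _ h ⟨t * Z, by simp only [mul_assoc]⟩
  have := length_pos_of_ne_one hy
  simp only [length_mul] at *
  omega

lemma length_mul_eq_of_eq (hMF : MiddleFact R X Y Z) (h₁ : MiddleFact R x Y₁ Z₁)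
    (h : X * Y * Z = x * Y₁ * Z₁) : (X * Y).length = (x * Y₁).length := by
  have hx : x.length ≤ X.length := hMF.2.1.2.2 x h₁.2.1.1 (h ▸ h₁.2.1.2.1)
  have hX : X.length ≤ x.length := h₁.2.1.2.2 X hMF.2.1.1 (h ▸ hMF.2.1.2.1)
  have hz : Z₁.length ≤ Z.length := hMF.2.2.1.2.2 Z₁ h₁.2.2.1.1 (h ▸ h₁.2.2.1.2.1)
  have hZ : Z.length ≤ Z₁.length := h₁.2.2.1.2.2 Z hMF.2.2.1.1 (h ▸ hMF.2.2.1.2.1)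
  have := congrArg length h
  simp only [length_mul] at *
  omega

lemma eq_of_isPrefix {V : FreeMonoid A} (hMF : MiddleFact R X Y Z) (hV : IsRelWord R V)
    (h : IsPrefix (X * Y) V) : X * Y * Z = V := by
  by_contra hne
  obtain ⟨t, rfl⟩ := h
  exact hMF.not_isPiece_mul hMF.2.2.2 (.refl Y) <| isPiece_of_two_occurrences hMF.1 hV
    (u := 1) (u' := 1) (by rw [one_mul]) (by rw [one_mul]) (Or.inl hne)

lemma eq_of_isPrefix_mul (hMF : MiddleFact R X Y Z) (h₁ : MiddleFact R x Y₁ Z₁)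
    (hy : IsPrefix y Y₁) (hXY : IsPrefix (X * Y) (x * y)) : y = Y₁ := by
  have hW := hMF.eq_of_isPrefix h₁.1 (hXY.trans ((hy.mul_left x).trans (.mul_right _ Z₁)))
  have := hMF.length_mul_eq_of_eq h₁ hW
  have := hXY.length_le
  exact hy.eq_of_length_le (by simp only [length_mul] at *; omega)

variable {w' x₁ y₁ x₂ y₂ Y₂ Z₂ : FreeMonoid A}

lemma false_of_isPrefix_two_chunks (hMF : MiddleFact R X Y Z)
    (h₁ : MiddleFact R x₁ Y₁ Z₁) (hy₁ : y₁ ≠ 1) (hy₁Y₁ : y₁ ≠ Y₁) (hy₁p : IsPrefix y₁ Y₁)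
    (h₂ : MiddleFact R x₂ Y₂ Z₂) (hy₂ : y₂ ≠ 1) (hy₂p : IsPrefix y₂ Y₂)
    (hpre : IsPrefix (x₁ * y₁ * (x₂ * y₂)) (X * Y * Z * w')) : False := by
  have hXY : IsPrefix (X * Y) (X * Y * Z * w') := ⟨Z * w', by simp only [mul_assoc]⟩
  have hc₁ : IsPrefix (x₁ * y₁) (X * Y * Z * w') := (IsPrefix.mul_right _ _).trans hpre
  have hlt : (x₁ * y₁).length < (X * Y).length := by
    by_contra! hle
    exact hy₁Y₁ (hMF.eq_of_isPrefix_mul h₁ hy₁p (hXY.of_length_le hc₁ hle))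
  obtain ⟨g, hg⟩ : IsPrefix (x₁ * y₁) (X * Y * Z) :=
    hc₁.of_length_le (.mul_right _ w') (by simp only [length_mul] at *; omega)
  have hc₂ : IsPrefix (x₂ * y₂) (g * w') := IsPrefix.of_mul_left <| hpre.trans <| by
    rw [← mul_assoc, hg]; exact .refl _
  -- the part of `x₂ * y₂` inside `W` occurs at position `|x₁ * y₁| > 0` of `W`
  have hcommon : ∀ c, IsPrefix c g → IsPrefix c (x₂ * y₂) → IsPiece R c := by
    rintro c ⟨s, rfl⟩ ⟨s', hs'⟩
    obtain ⟨r, rfl⟩ := hy₂p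
    refine isPiece_of_two_occurrences hMF.1 h₂.1 (u := x₁ * y₁) (u' := 1)
      (v := s) (by rw [← hg]; simp only [mul_assoc]) (v' := s' * r * Z₂) ?_ (Or.inr fun h => hy₁ ?_)
    · rw [← mul_assoc x₂, ← hs']; simp only [one_mul, mul_assoc]
    · have := congrArg length h
      simp only [length_mul, length_one] at this
      exact length_eq_zero.mp (by omega)
  rcases (IsPrefix.mul_right g w').total hc₂ with hg₂ | h₂g
  · have hZ := hMF.2.2.1.2.2 g (hcommon g (.refl g) hg₂) ⟨x₁ * y₁, hg⟩
    have := congrArg length hg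
    simp only [length_mul] at *
    omega
  · exact h₂.not_isPiece_mul hy₂ hy₂p (hcommon _ h₂g (.refl _))

end MiddleFact

lemma IsOverlapPrefix.length_le {X Y Z w' q : FreeMonoid A} (hMF : MiddleFact R X Y Z)
    (hq : IsOverlapPrefix R (X * Y * Z * w') q) : q.length ≤ (X * Y * Z).length := by
  by_contra! hlen
  obtain ⟨hqu, b, pairs, Xn, Yn, hq, ⟨Zn, hn⟩, hpairs, hnofactor⟩ := hq
  have hXY : IsPrefix (X * Y) q := IsPrefix.of_length_le ⟨Z * w', by simp only [mul_assoc]⟩ hqu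
    (by simp only [length_mul] at *; omega)
  have hb : b = 1 := by
    by_contra hb
    obtain ⟨t, ht⟩ := hXY
    exact hnofactor ⟨1, t, X, Y, ⟨Z, hMF⟩, by rw [one_mul, ht], length_pos_of_ne_one hb⟩
  subst hb
  rcases pairs with _ | ⟨⟨x₁, y₁⟩, rest⟩
  · simp only [List.map_nil, List.prod_nil, one_mul] at hq
    subst hq
    have hW := hMF.eq_of_isPrefix hn.1 (hXY.trans (.mul_right _ Zn))
    have := hMF.length_mul_eq_of_eq hn hW
    simp only [length_mul] at *
    omega
  · obtain ⟨Y₁, ⟨Z₁, h₁⟩, hy₁, hy₁Y₁, hy₁p⟩ := hpairs _ List.mem_cons_self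
    obtain ⟨x₂, y₂, Y₂, Z₂, h₂, hy₂, hy₂p, hpre⟩ : ∃ x₂ y₂ Y₂ Z₂, MiddleFact R x₂ Y₂ Z₂ ∧
        y₂ ≠ 1 ∧ IsPrefix y₂ Y₂ ∧ IsPrefix (x₁ * y₁ * (x₂ * y₂)) q := by
      rcases rest with _ | ⟨⟨x₂, y₂⟩, rest⟩
      · exact ⟨Xn, Yn, Yn, Zn, hn, hn.2.2.2, .refl _, ⟨1, by simp [hq, mul_assoc]⟩⟩
      · obtain ⟨Y₂, ⟨Z₂, h₂⟩, hy₂, -, hy₂p⟩ := hpairs _ (List.mem_cons_of_mem _ List.mem_cons_self)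
        exact ⟨x₂, y₂, Y₂, Z₂, h₂, hy₂, hy₂p,
          ⟨(rest.map fun q => q.1 * q.2).prod * Xn * Yn, by simp [hq, mul_assoc]⟩⟩
    exact hMF.false_of_isPrefix_two_chunks h₁ hy₁ hy₁Y₁ hy₁p h₂ hy₂ hy₂p (hpre.trans hqu)

lemma IsRelationPrefix.length_lt_of_isPiece {p w' a X Y : FreeMonoid A} (hp : IsPiece R p)
    (h : IsRelationPrefix R (p * w') a X Y) : p.length < (a * X * Y).length := by
  by_contra! hle
  obtain ⟨⟨t, ht⟩, Z, hMF⟩ := h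
  obtain ⟨d, hd⟩ := IsPrefix.of_length_le ⟨t, ht⟩ (.mul_right p w') hle
  exact hMF.not_isPiece_mul hMF.2.2.2 (.refl Y)
    (hp.of_isFactor ⟨a, d, by rw [← hd]; simp only [mul_assoc]⟩)

lemma rho_mul_lt_length {p w' : FreeMonoid A} (hp : IsPiece R p) :
    rho R (p * w') < w'.length := by
  unfold rho
  split_ifs with h
  · obtain ⟨⟨⟨t, ht⟩, -⟩, a, X, Y, hq, hrel, -⟩ := h.choose_spec
    have := hrel.length_lt_of_isPiece hp
    rw [← hq] at this
    have := congrArg length ht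
    simp only [length_mul] at *
    omega
  · omega

lemma length_le_rho {X Y Z w' : FreeMonoid A} (hMF : MiddleFact R X Y Z)
    (h : ∃ q, IsCleanOverlapPrefix R (X * Y * Z * w') q) :
    (w'.length : ℤ) ≤ rho R (X * Y * Z * w') := by
  rw [rho, dif_pos h]
  have := h.choose_spec.1.length_le hMF
  simp only [length_mul] at *
  omega

end SmallOverlap

theorem statement12_general {A : Type*} (R : Set (FreeMonoid A × FreeMonoid A))
    (X Y Z w' p : FreeMonoid A)
    (hMF : MiddleFact R X Y Z)
    (hover : IsOverlapPrefix R (X * Y * Z * w') (X * Y))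
    (hclean : IsCleanRelationPrefix R (X * Y * Z * w') 1 X Y)
    (hp : IsPiece R p) :
    rho R (p * w') < rho R (X * Y * Z * w') :=
  (rho_mul_lt_length hp).trans_le <|
    length_le_rho hMF ⟨X * Y, hover, 1, X, Y, by rw [one_mul], hclean⟩

/-- **Lemma.** Let `⟨A|R⟩` be a C(4) presentation. If `w = X * Y * Z * w'` where
`X * Y * Z` is a relation word with maximal piece prefix `X` and middle word `Y`,
`X * Y` is a clean overlap prefix of `w`, and `p` is any piece, then
`ρ(p * w') < ρ(w)`. -/
theorem statement12 {A : Type*} (R : Set (FreeMonoid A × FreeMonoid A))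
    (hC : SmallOverlapC R 4) (X Y Z w' p : FreeMonoid A)
    (hMF : MiddleFact R X Y Z)
    (hover : IsOverlapPrefix R (X * Y * Z * w') (X * Y))
    (hclean : IsCleanRelationPrefix R (X * Y * Z * w') 1 X Y)
    (hp : IsPiece R p) :
    rho R (p * w') < rho R (X * Y * Z * w') :=
  statement12_general R X Y Z w' p hMF hover hclean hp
end

section
/- Let ⟨A|R⟩ be an equivalence presentation satisfying the condition C(4). Then the monoid presented is left cancellative if and only if R contains no relation of the form (ar, as) where a ∈ A and r, s are words over A with r ≠ s. -/
open FreeMonoid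

/-- `⟨A|R⟩` is an equivalence presentation: `R` is an equivalence relation on the set
of relation words. -/
def IsEquivPres {A : Type*} (R : Set (FreeMonoid A × FreeMonoid A)) : Prop :=
  (∀ w, IsRelWord R w → (w, w) ∈ R) ∧
  (∀ u v, (u, v) ∈ R → (v, u) ∈ R) ∧
  (∀ u v w, (u, v) ∈ R → (v, w) ∈ R → (u, w) ∈ R)


/-!
To cancel a letter, induct on the length of a rewriting chain `a u → ⋯ → a v`. If the first
step does not touch the initial `a`, the induction hypothesis applies to the rest. Otherwise it
replaces a relation word `a t` by an equivalent `ω`, and from then on every word of the chain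
keeps the shape recorded by `Reached`: the current replacement of `a t`, possibly cut into
`P S` with a piece `S` starting a nested relation word, recursively. This rests on two facts
about small overlap: a relation word is neither a proper factor of a relation word nor a
product of two pieces. Collapsing a nested level needs cancellation of the prefix `S`, which
the induction hypothesis supplies since the chains involved are shorter. At `a v` the front
word begins with `a`, so it is equivalent to `a t`, hence equal to it by hypothesis, and the
tails give `u ≡ v`.

Conversely, a proper suffix of a relation word contains no relation word, so its congruence
class is a singleton.
-/

theorem SmallOverlapC.mono {A : Type*} {R : Set (FreeMonoid A × FreeMonoid A)} {m n : ℕ}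
    (h : SmallOverlapC R m) (hnm : n ≤ m) : SmallOverlapC R n :=
  fun w hw l hl hprod => hnm.trans (h w hw l hl hprod)

namespace SmallOverlap

variable {A : Type*}

section Rewriting

variable (R : Set (FreeMonoid A × FreeMonoid A))

def Related (u v : List A) : Prop := (ofList u, ofList v) ∈ R

def Step (u v : List A) : Prop :=
  ∃ x m m' y, Related R m m' ∧ u = x ++ m ++ y ∧ v = x ++ m' ++ y

inductive Chain : ℕ → List A → List A → Prop
  | refl (u : List A) : Chain 0 u u
  | head {n : ℕ} {u w v : List A} : Step R u w → Chain n w v → Chain (n + 1) u v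

end Rewriting

variable {R : Set (FreeMonoid A × FreeMonoid A)}

theorem _root_.IsEquivPres.related_symm (h : IsEquivPres R) {u v : List A}
    (huv : Related R u v) : Related R v u :=
  h.2.1 _ _ huv

theorem _root_.IsEquivPres.related_trans (h : IsEquivPres R) {u v w : List A}
    (huv : Related R u v) (hvw : Related R v w) : Related R u w :=
  h.2.2 _ _ _ huv hvw

theorem Step.of_related {m m' : List A} (h : Related R m m') (y : List A) :
    Step R (m ++ y) (m' ++ y) :=
  ⟨[], m, m', y, h, rfl, rfl⟩

theorem Step.append_left {u v : List A} (h : Step R u v) (p : List A) :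
    Step R (p ++ u) (p ++ v) := by
  obtain ⟨x, m, m', y, hr, rfl, rfl⟩ := h
  exact ⟨p ++ x, m, m', y, hr, by simp, by simp⟩

theorem Step.append_right {u v : List A} (h : Step R u v) (q : List A) :
    Step R (u ++ q) (v ++ q) := by
  obtain ⟨x, m, m', y, hr, rfl, rfl⟩ := h
  exact ⟨x, m, m', y ++ q, hr, by simp, by simp⟩

theorem Step.symm (hsym : ∀ ⦃u v⦄, Related R u v → Related R v u) {u v : List A} (h : Step R u v) :
    Step R v u := by
  obtain ⟨x, m, m', y, hr, rfl, rfl⟩ := h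
  exact ⟨x, m', m, y, hsym hr, rfl, rfl⟩

namespace Chain

theorem trans {m n : ℕ} {u v w : List A} (h₁ : Chain R m u v) (h₂ : Chain R n v w) :
    Chain R (m + n) u w := by
  induction h₁ with
  | refl => simpa using h₂
  | @head k _ _ _ s _ ih => simpa [Nat.add_right_comm k 1 n] using head s (ih h₂)

theorem tail {n : ℕ} {u v w : List A} (h : Chain R n u v) (s : Step R v w) :
    Chain R (n + 1) u w :=
  h.trans (head s (refl w))

theorem symm (hsym : ∀ ⦃u v⦄, Related R u v → Related R v u) {n : ℕ} {u v : List A} (h : Chain R n u v) :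
    Chain R n v u := by
  induction h with
  | refl => exact refl _
  | head s _ ih => exact ih.tail (s.symm hsym)

theorem append_left {n : ℕ} {u v : List A} (h : Chain R n u v) (p : List A) :
    Chain R n (p ++ u) (p ++ v) := by
  induction h with
  | refl => exact refl _
  | head s _ ih => exact head (s.append_left p) ih

theorem append_right {n : ℕ} {u v : List A} (h : Chain R n u v) (q : List A) :
    Chain R n (u ++ q) (v ++ q) := by
  induction h with
  | refl => exact refl _
  | head s _ ih => exact head (s.append_right q) ih

end Chain

theorem Chain.presCon {n : ℕ} {u v : List A} (h : Chain R n u v) :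
    presCon R (ofList u) (ofList v) := by
  induction h with
  | refl => exact ConGen.Rel.refl _
  | head s _ ih =>
    obtain ⟨x, m, m', y, hr, rfl, rfl⟩ := s
    exact ConGen.Rel.trans (ConGen.Rel.mul (ConGen.Rel.mul (ConGen.Rel.refl _)
      (ConGen.Rel.of _ _ hr)) (ConGen.Rel.refl _)) ih

theorem exists_chain_of_presCon (hsym : ∀ ⦃u v⦄, Related R u v → Related R v u)
    {u v : FreeMonoid A} (h : presCon R u v) : ∃ n, Chain R n (toList u) (toList v) := by
  induction h with
  | of x y hxy => exact ⟨1, .head ⟨[], toList x, toList y, [], hxy, by simp, by simp⟩ (.refl _)⟩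
  | refl x => exact ⟨0, .refl _⟩
  | symm _ ih => obtain ⟨n, hn⟩ := ih; exact ⟨n, hn.symm hsym⟩
  | trans _ _ ih₁ ih₂ =>
    obtain ⟨n, hn⟩ := ih₁; obtain ⟨m, hm⟩ := ih₂
    exact ⟨n + m, hn.trans hm⟩
  | mul _ _ ih₁ ih₂ =>
    obtain ⟨n, hn⟩ := ih₁; obtain ⟨m, hm⟩ := ih₂
    exact ⟨n + m, (hn.append_right _).trans (hm.append_left _)⟩

theorem isRelWord_left {m m' : List A} (h : Related R m m') : IsRelWord R (ofList m) :=
  ⟨_, h, Or.inl rfl⟩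

theorem isRelWord_right {m m' : List A} (h : Related R m m') : IsRelWord R (ofList m') :=
  ⟨_, h, Or.inr rfl⟩

theorem isFactor_ofList {u w x y : List A} (e : w = x ++ u ++ y) :
    IsFactor (ofList u) (ofList w) :=
  ⟨ofList x, ofList y, by rw [e]; rfl⟩

theorem isPiece_of_occurrences {u w₁ w₂ x₁ y₁ x₂ y₂ : List A}
    (h₁ : IsRelWord R (ofList w₁)) (h₂ : IsRelWord R (ofList w₂))
    (e₁ : w₁ = x₁ ++ u ++ y₁) (e₂ : w₂ = x₂ ++ u ++ y₂) (hne : w₁ ≠ w₂ ∨ x₁ ≠ x₂) :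
    IsPiece R (ofList u) := by
  by_cases hw : w₁ = w₂
  · subst hw
    have hx : x₁ ≠ x₂ := hne.resolve_left (not_not.mpr rfl)
    refine Or.inr (Or.inr ⟨ofList w₁, h₁, ofList x₁, ofList y₁, ofList x₂, ofList y₂, ?_, ?_,
      fun h => hx (ofList.injective h)⟩)
    · rw [e₁]; rfl
    · rw [e₂]; rfl
  · exact Or.inr (Or.inl ⟨ofList w₁, ofList w₂, h₁, h₂, fun h => hw (ofList.injective h),
      isFactor_ofList e₁, isFactor_ofList e₂⟩)

theorem append_eq_factor_cases {l₁ l₂ x m y : List A} (h : l₁ ++ l₂ = x ++ m ++ y) :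
    (∃ x', x = l₁ ++ x' ∧ l₂ = x' ++ m ++ y) ∨
    (∃ y', l₁ = x ++ m ++ y' ∧ y = y' ++ l₂) ∨
    (∃ s t, s ≠ [] ∧ t ≠ [] ∧ l₁ = x ++ s ∧ m = s ++ t ∧ l₂ = t ++ y) := by
  rw [List.append_assoc] at h
  rcases List.append_eq_append_iff.mp h with ⟨a, rfl, rfl⟩ | ⟨c, rfl, hc⟩
  · exact Or.inl ⟨a, rfl, by simp⟩
  rcases List.append_eq_append_iff.mp hc with ⟨a, rfl, rfl⟩ | ⟨t, rfl, rfl⟩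
  · exact Or.inr (Or.inl ⟨a, by simp, rfl⟩)
  by_cases hc : c = []
  · subst hc; exact Or.inl ⟨[], by simp, by simp⟩
  by_cases ht : t = []
  · subst ht; exact Or.inr (Or.inl ⟨[], by simp, by simp⟩)
  exact Or.inr (Or.inr ⟨c, t, hc, ht, rfl, rfl, rfl⟩)

section SmallOverlapThree

variable (hC : SmallOverlapC R 3)
include hC

theorem ne_nil_of_isRelWord {w : List A} (h : IsRelWord R (ofList w)) : w ≠ [] := by
  rintro rfl
  have := hC _ h [] (by simp) rfl
  simp at this

theorem not_isPiece_of_isRelWord {w : List A} (h : IsRelWord R (ofList w)) :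
    ¬ IsPiece R (ofList w) := fun hp => by
  have := hC _ h [ofList w] (by simpa using hp) (by simp)
  simp at this

theorem not_isPiece_of_isRelWord_append {x y : List A} (h : IsRelWord R (ofList (x ++ y)))
    (hx : IsPiece R (ofList x)) : ¬ IsPiece R (ofList y) := fun hy => by
  have := hC _ h [ofList x, ofList y] (by simp [hx, hy]) (by simp)
  simp at this

theorem eq_nil_of_isRelWord_factor {m w x y : List A} (hm : IsRelWord R (ofList m))
    (hw : IsRelWord R (ofList w)) (e : w = x ++ m ++ y) : x = [] ∧ y = [] := by
  by_cases hmw : m = w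
  · subst hmw
    have := congrArg List.length e
    simp only [List.length_append] at this
    exact ⟨List.eq_nil_of_length_eq_zero (by omega), List.eq_nil_of_length_eq_zero (by omega)⟩
  · exact absurd (isPiece_of_occurrences (x₁ := []) (y₁ := []) hm hw (by simp) e (.inl hmw))
      (not_isPiece_of_isRelWord hC hm)

theorem eq_of_chain_of_isRelWord_append {x r s : List A} {n : ℕ}
    (hw : IsRelWord R (ofList (x ++ r))) (hx : x ≠ []) (h : Chain R n r s) : r = s := by
  cases h with
  | refl => rfl
  | head hs _ =>
    obtain ⟨x', m, m', y, hr, rfl, -⟩ := hs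
    have := eq_nil_of_isRelWord_factor hC (isRelWord_left hr) hw (x := x ++ x') (y := y) (by simp)
    simp_all

theorem Step.cases_cons {a : A} {u z : List A} (h : Step R (a :: u) z) :
    (∃ z', z = a :: z' ∧ Step R u z') ∨
      ∃ t ω y, Related R (a :: t) ω ∧ u = t ++ y ∧ z = ω ++ y := by
  obtain ⟨x, m, m', y, hr, e, rfl⟩ := h
  rcases x with _ | ⟨b, x⟩
  · obtain ⟨b, t, rfl⟩ := List.exists_cons_of_ne_nil (ne_nil_of_isRelWord hC (isRelWord_left hr))
    simp only [List.nil_append, List.cons_append, List.cons.injEq] at e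
    obtain ⟨rfl, rfl⟩ := e
    exact .inr ⟨t, m', y, hr, rfl, rfl⟩
  · simp only [List.cons_append, List.cons.injEq] at e
    obtain ⟨rfl, rfl⟩ := e
    exact .inl ⟨x ++ m' ++ y, rfl, x, m, m', y, hr, rfl, rfl⟩

end SmallOverlapThree

variable (R) in
/-- `Reached R v w θ c` records how `v` arises from `w θ`, for a relation word `w`: replace `w` by
an equivalent `ω` and rewrite the tail to some `ξ` (`tail`); or, in `ω ν ξ` with `ω = P S`, where
the piece `S` begins the relation word `S ν`, rewrite `S ν ξ` recursively (`overlap`). The number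
`c` bounds the length of a chain from `v` back to `w θ`. -/
inductive Reached : List A → List A → List A → ℕ → Prop
  | tail {w ω ξ θ : List A} {c₁ c : ℕ} : Related R w ω → Chain R c₁ ξ θ → c₁ < c →
      Reached (ω ++ ξ) w θ c
  | overlap {w ω P S ν ξ θ v : List A} {c₁ c₂ c : ℕ} : Related R w ω → ω = P ++ S → P ≠ [] →
      S ≠ [] → IsPiece R (ofList S) → Chain R c₁ (ν ++ ξ) θ → Reached v (S ++ ν) ξ c₂ →
      c₁ + c₂ < c → Reached (P ++ v) w θ c

variable (R) in
def LeftCancelsBelow (N : ℕ) : Prop :=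
  ∀ k < N, ∀ p u v : List A, Chain R k (p ++ u) (p ++ v) → ∃ L ≤ k, Chain R L u v

theorem LeftCancelsBelow.mono {M N : ℕ} (h : LeftCancelsBelow R N) (hMN : M ≤ N) :
    LeftCancelsBelow R M :=
  fun k hk => h k (hk.trans_le hMN)

theorem leftCancelsBelow_of_cons {N : ℕ}
    (h : ∀ k < N, ∀ (a : A) (u v : List A), Chain R k (a :: u) (a :: v) → ∃ L ≤ k, Chain R L u v) :
    LeftCancelsBelow R N := by
  intro k hk p
  induction p generalizing k with
  | nil => exact fun u v h => ⟨k, le_rfl, h⟩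
  | cons b p ih =>
    intro u v hch
    obtain ⟨L, hL, h'⟩ := h k hk b (p ++ u) (p ++ v) hch
    obtain ⟨L', hL', h''⟩ := ih L (hL.trans_lt hk) u v h'
    exact ⟨L', hL'.trans hL, h''⟩

namespace Reached

variable {v w θ : List A} {c : ℕ}

theorem mono {c' : ℕ} (h : Reached R v w θ c) (hle : c ≤ c') : Reached R v w θ c' := by
  cases h with
  | tail hrel hch hc => exact tail hrel hch (hc.trans_le hle)
  | overlap hrel he hP hS hpc hch hsub hc =>
    exact overlap hrel he hP hS hpc hch hsub (hc.trans_le hle)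

theorem exists_chain (hsym : ∀ ⦃u v⦄, Related R u v → Related R v u) (h : Reached R v w θ c) :
    ∃ L ≤ c, Chain R L v (w ++ θ) := by
  induction h with
  | @tail w ω ξ θ c₁ c hrel hch hc =>
    exact ⟨c₁ + 1, hc, (hch.append_left ω).tail (.of_related (hsym hrel) θ)⟩
  | @overlap w ω P S ν ξ θ v c₁ c₂ c hrel he hP hS hpc hch hsub hc ih =>
    obtain ⟨L, hL, hv⟩ := ih
    have hω : Chain R c₁ (P ++ (S ++ ν ++ ξ)) (ω ++ θ) := by
      simpa [he] using hch.append_left ω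
    exact ⟨L + c₁ + 1, by omega, ((hv.append_left P).trans hω).tail (.of_related (hsym hrel) θ)⟩

theorem not_isPrefix (hC : SmallOverlapC R 3) (h : Reached R v w θ c) {π ν : List A}
    (hw : IsRelWord R (ofList (π ++ ν))) (hπ : π ≠ []) (hpc : IsPiece R (ofList π)) :
    ¬ ν <+: v := by
  rintro ⟨rest, hv⟩
  cases h with
  | tail hrel _ _ =>
    rcases List.append_eq_append_iff.mp hv with ⟨a, rfl, -⟩ | ⟨b, rfl, -⟩
    · exact not_isPiece_of_isRelWord_append hC hw hpc <| isPiece_of_occurrences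
        (x₁ := π) (y₁ := []) (x₂ := []) (y₂ := a) hw (isRelWord_right hrel) (by simp) (by simp)
        (.inr hπ)
    · exact hπ (eq_nil_of_isRelWord_factor hC (isRelWord_right hrel) hw (y := b) (by simp)).1
  | @overlap _ _ _ S _ _ _ _ _ _ _ hrel he _ _ hpcS _ _ _ =>
    rcases List.append_eq_append_iff.mp hv with ⟨a, rfl, -⟩ | ⟨b, rfl, -⟩
    · exact not_isPiece_of_isRelWord_append hC hw hpc <| isPiece_of_occurrences
        (x₁ := π) (y₁ := []) (x₂ := []) (y₂ := a ++ S) hw (isRelWord_right hrel) (by simp)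
        (by simp [he]) (.inr hπ)
    · refine not_isPiece_of_isRelWord_append hC (he ▸ isRelWord_right hrel) ?_ hpcS
      exact isPiece_of_occurrences (x₁ := π) (y₁ := b) (x₂ := []) (y₂ := S) hw
        (isRelWord_right hrel) (by simp) (by simp [he]) (.inr hπ)

section Step

variable (hC : SmallOverlapC R 3) (hsym : ∀ ⦃u v⦄, Related R u v → Related R v u)
  (htrans : ∀ ⦃u v w⦄, Related R u v → Related R v w → Related R u w)
include hC hsym htrans

theorem step_of_tail {ω ξ v' : List A} {c₁ : ℕ} (hrel : Related R w ω) (hch : Chain R c₁ ξ θ)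
    (hc : c₁ < c) (hs : Step R (ω ++ ξ) v') : Reached R v' w θ (c + 1) := by
  obtain ⟨x, m, m', y, hr, e, rfl⟩ := hs
  rcases append_eq_factor_cases e with
    ⟨x', rfl, rfl⟩ | ⟨y', hω, rfl⟩ | ⟨s, t, hs, ht, rfl, rfl, rfl⟩
  · have hstep : Step R (x' ++ m' ++ y) (x' ++ m ++ y) := ⟨x', m', m, y, hsym hr, rfl, rfl⟩
    simpa using tail hrel (.head hstep hch) (by omega : c₁ + 1 < c + 1)
  · obtain ⟨rfl, rfl⟩ := eq_nil_of_isRelWord_factor hC (isRelWord_left hr) (isRelWord_right hrel) hω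
    simp only [List.nil_append, List.append_nil] at hω ⊢
    subst hω
    exact tail (htrans hrel hr) hch (by omega)
  · by_cases hx : x = []
    · subst hx
      exact absurd (eq_nil_of_isRelWord_factor hC (isRelWord_right hrel) (isRelWord_left hr)
        (x := []) (y := t) (by simp)).2 ht
    · have hpc : IsPiece R (ofList s) := isPiece_of_occurrences (x₁ := x) (y₁ := []) (x₂ := [])
        (y₂ := t) (isRelWord_right hrel) (isRelWord_left hr) (by simp) (by simp) (.inr hx)
      simpa using overlap hrel rfl hx hs hpc hch (tail hr (.refl y) zero_lt_one)
        (by omega : c₁ + 1 < c + 1)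

theorem step_of_overlap {ω P S ν ξ v v' : List A} {c₁ c₂ : ℕ} (hcancel : LeftCancelsBelow R c)
    (hrel : Related R w ω) (he : ω = P ++ S) (hP : P ≠ []) (hS : S ≠ [])
    (hpcS : IsPiece R (ofList S)) (hch : Chain R c₁ (ν ++ ξ) θ) (hsub : Reached R v (S ++ ν) ξ c₂)
    (hc : c₁ + c₂ < c) (ih : ∀ v', Step R v v' → Reached R v' (S ++ ν) ξ (c₂ + 1))
    (hs : Step R (P ++ v) v') : Reached R v' w θ (c + 1) := by
  obtain ⟨x, m, m', y, hr, e, rfl⟩ := hs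
  rcases append_eq_factor_cases e with
    ⟨x', rfl, rfl⟩ | ⟨y', rfl, rfl⟩ | ⟨s, t, hs, ht, rfl, rfl, rfl⟩
  · simpa using overlap hrel he hP hS hpcS hch (ih _ ⟨x', m, m', y, hr, rfl, rfl⟩)
      (by omega : c₁ + (c₂ + 1) < c + 1)
  · have := eq_nil_of_isRelWord_factor hC (isRelWord_left hr) (isRelWord_right hrel)
      (x := x) (y := y' ++ S) (by simp [he])
    simp_all
  · by_cases hpop : x = [] ∧ s ++ t = ω
    · -- the rewritten word is `ω` itself: collapse the nested level by cancelling `S`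
      obtain ⟨rfl, hm⟩ := hpop
      have htS : t = S := by simpa using hm.trans he
      subst htS
      obtain ⟨L, hL, hv⟩ := hsub.exists_chain hsym
      obtain ⟨L', hL', hy⟩ := hcancel L (by omega) t y (ν ++ ξ) (by simpa using hv)
      simpa using tail (htrans hrel (hm ▸ hr)) (hy.trans hch) (by omega : L' + c₁ < c + 1)
    · have hpc : IsPiece R (ofList s) := isPiece_of_occurrences (x₁ := x) (y₁ := S) (x₂ := [])
        (y₂ := t) (isRelWord_right hrel) (isRelWord_left hr) (by simp [he]) (by simp)
        (by by_contra! h; exact hpop ⟨h.2, h.1.symm⟩)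
      exact absurd ⟨y, rfl⟩ (hsub.not_isPrefix hC (isRelWord_left hr) hs hpc)

theorem step (h : Reached R v w θ c) (hcancel : LeftCancelsBelow R c) {v' : List A}
    (hs : Step R v v') : Reached R v' w θ (c + 1) := by
  induction h generalizing v' with
  | tail hrel hch hc => exact step_of_tail hC hsym htrans hrel hch hc hs
  | overlap hrel he hP hS hpc hch hsub hc ih =>
    exact step_of_overlap hC hsym htrans hcancel hrel he hP hS hpc hch hsub hc
      (fun _ hs' => ih (hcancel.mono (by omega)) hs') hs

theorem chain {k : ℕ} {z : List A} (hch : Chain R k v z) (h : Reached R v w θ c)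
    (hcancel : LeftCancelsBelow R (c + k)) : Reached R z w θ (c + k) := by
  induction hch generalizing c with
  | refl => exact h
  | @head n _ _ _ s _ ih =>
    exact (ih (h.step hC hsym htrans (hcancel.mono (by omega)) s) (hcancel.mono (by omega))).mono
      (by omega)

end Step

theorem exists_chain_cons (hC : SmallOverlapC R 3)
    (hsym : ∀ ⦃u v⦄, Related R u v → Related R v u)
    (hcons : ∀ ⦃a : A⦄ ⦃t t' : List A⦄, Related R (a :: t) (a :: t') → t = t')
    {a : A} {σ t : List A} (h : Reached R (a :: σ) (a :: t) θ c) :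
    ∃ L ≤ c, Chain R L σ (t ++ θ) := by
  generalize hv : a :: σ = v at h
  generalize hw : a :: t = w at h
  cases h with
  | @tail _ ω ξ _ c₁ _ hrel hch hc =>
    subst hw
    obtain ⟨b, ω', rfl⟩ := List.exists_cons_of_ne_nil (ne_nil_of_isRelWord hC (isRelWord_right hrel))
    simp only [List.cons_append, List.cons.injEq] at hv
    obtain ⟨rfl, rfl⟩ := hv
    obtain rfl := hcons hrel
    exact ⟨c₁, hc.le, hch.append_left _⟩
  | @overlap _ ω P S ν ξ _ v c₁ c₂ _ hrel he hP hS hpc hch hsub hc =>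
    subst hw he
    obtain ⟨b, P', rfl⟩ := List.exists_cons_of_ne_nil hP
    simp only [List.cons_append, List.cons.injEq] at hv
    obtain ⟨rfl, rfl⟩ := hv
    obtain rfl := hcons hrel
    obtain ⟨L, hL, hvch⟩ := hsub.exists_chain hsym
    have htail : Chain R c₁ (P' ++ (S ++ ν ++ ξ)) (P' ++ S ++ θ) := by
      simpa using hch.append_left (P' ++ S)
    exact ⟨L + c₁, by omega, (hvch.append_left P').trans htail⟩

end Reached

theorem eq_of_presCon_of_mem_cons (hC : SmallOverlapC R 3)
    (hsym : ∀ ⦃u v⦄, Related R u v → Related R v u) {a : A} {r s : FreeMonoid A}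
    (hmem : (of a * r, of a * s) ∈ R) (h : presCon R r s) : r = s :=
  let ⟨_, hn⟩ := exists_chain_of_presCon hsym h
  eq_of_chain_of_isRelWord_append hC (x := [a]) ⟨_, hmem, .inl rfl⟩ (List.cons_ne_nil a []) hn

section Cancellation

variable (hC : SmallOverlapC R 3) (hsym : ∀ ⦃u v⦄, Related R u v → Related R v u)
  (htrans : ∀ ⦃u v w⦄, Related R u v → Related R v w → Related R u w)
  (hcons : ∀ ⦃a : A⦄ ⦃t t' : List A⦄, Related R (a :: t) (a :: t') → t = t')
include hC hsym htrans hcons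

theorem exists_chain_of_chain_cons (n : ℕ) :
    ∀ (a : A) (u v : List A), Chain R n (a :: u) (a :: v) → ∃ L ≤ n, Chain R L u v := by
  induction n using Nat.strong_induction_on with
  | _ n ih =>
  intro a u v h
  have hcancel : LeftCancelsBelow R n := leftCancelsBelow_of_cons ih
  cases h with
  | refl => exact ⟨0, le_rfl, .refl u⟩
  | @head k _ _ _ hs hrest =>
    rcases Step.cases_cons hC hs with ⟨z, rfl, hs'⟩ | ⟨t, ω, y, hr, rfl, rfl⟩
    · obtain ⟨L, hL, h'⟩ := ih k k.lt_succ_self a z v hrest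
      exact ⟨L + 1, by omega, .head hs' h'⟩
    · have hreach := (Reached.tail hr (.refl y) zero_lt_one).chain hC hsym htrans hrest
        (hcancel.mono (by omega))
      obtain ⟨L, hL, h'⟩ := hreach.exists_chain_cons hC hsym hcons
      exact ⟨L, by omega, h'.symm hsym⟩

theorem exists_chain_of_chain_append {n : ℕ} {p u v : List A}
    (h : Chain R n (p ++ u) (p ++ v)) : ∃ L, Chain R L u v :=
  have hcancel : LeftCancelsBelow R (n + 1) :=
    leftCancelsBelow_of_cons fun k _ => exists_chain_of_chain_cons hC hsym htrans hcons k
  (hcancel n n.lt_succ_self p u v h).imp fun _ => And.right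

theorem presCon_of_presCon_mul_left {p u v : FreeMonoid A} (h : presCon R (p * u) (p * v)) :
    presCon R u v :=
  let ⟨_, hn⟩ := exists_chain_of_presCon hsym h
  let ⟨_, hL⟩ := exists_chain_of_chain_append hC hsym htrans hcons
    (p := toList p) (u := toList u) (v := toList v) hn
  hL.presCon

end Cancellation

end SmallOverlap

open SmallOverlap

/-- **Theorem.** The monoid presented by a C(4) equivalence presentation `⟨A|R⟩` is
left cancellative if and only if `R` contains no relation of the form `(a r, a s)`
with `a ∈ A` and `r ≠ s`. -/
theorem statement13 {A : Type*} (R : Set (FreeMonoid A × FreeMonoid A))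
    (heq : IsEquivPres R) (hC : SmallOverlapC R 4) :
    (∀ x y z : (presCon R).Quotient, x * y = x * z → y = z) ↔
      ¬ ∃ (a : A) (r s : FreeMonoid A), r ≠ s ∧ (of a * r, of a * s) ∈ R := by
  have hC3 : SmallOverlapC R 3 := hC.mono (by norm_num)
  have hsym : ∀ ⦃u v⦄, Related R u v → Related R v u := fun _ _ => heq.related_symm
  have htrans : ∀ ⦃u v w⦄, Related R u v → Related R v w → Related R u w :=
    fun _ _ _ => heq.related_trans
  constructor
  · rintro hcancel ⟨a, r, s, hrs, hmem⟩
    refine hrs (eq_of_presCon_of_mem_cons hC3 hsym hmem ((presCon R).eq.mp ?_))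
    refine hcancel (of a) r s ?_
    rw [← Con.coe_mul, ← Con.coe_mul]
    exact (presCon R).eq.mpr (ConGen.Rel.of _ _ hmem)
  · intro hnr x y z
    have hcons : ∀ ⦃a : A⦄ ⦃t t' : List A⦄, Related R (a :: t) (a :: t') → t = t' :=
      fun a t t' h => by_contra fun hne =>
        hnr ⟨a, ofList t, ofList t', fun h' => hne (ofList.injective h'), h⟩
    induction x using Con.induction_on with | _ p =>
    induction y using Con.induction_on with | _ u =>
    induction z using Con.induction_on with | _ v =>
    rw [← Con.coe_mul, ← Con.coe_mul, Con.eq, Con.eq]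
    exact presCon_of_presCon_mul_left hC3 hsym htrans hcons
end
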